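/- arXiv:1303.0127 — 2 statements merged into one kernel-verified Lean document; each statement's English description precedes it below -/
import Mathlib

section
/- If a projection-valued measure F on a measurable space Ω (taking values in projections on ℓ²(ℕ)) is jointly measurable with the canonical phase observable E_can (i.e., there exists a POVM M on the product σ-algebra whose margins are F and E_can), then F is trivial: for each measurable X, F(X) = c_X · I with c_X ∈ {0,1}. -/
/-!
A sharp observable that is jointly measurable with a POVM commutes with it: writing
`P = F X = M (X × [0,2π))`, the positive operators `M (X × Θ) ≤ P` and `M (Xᶜ × Θ) ≤ 1 - P`
are absorbed resp. annihilated by `P`, so `P` commutes with their sum `E_can Θ`.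

In the basis `ket n` the matrix elements of `E_can [0, t)` are explicit functions of `t` and
of `k - n` only. Taking the `j`-th Fourier coefficient on `[0, 2π)` of the commutation relation
`⟪ket m, P (E_can [0, t) (ket 0))⟫ = ⟪ket m, E_can [0, t) (P (ket 0))⟫` yields
`⟪ket m, P (ket j)⟫ = ⟪ket (m - j), P (ket 0)⟫` for `j ≤ m` and `0` otherwise. Hence `P` is a
multiple of the identity, and being idempotent the multiple is `0` or `1`.
-/

open MeasureTheory Complex Real
open scoped InnerProductSpace

noncomputable section

abbrev H : Type := lp (fun _ : ℕ => ℂ) 2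

def ket (n : ℕ) : H := lp.single 2 n 1

theorem IsStarProjection.commute_add_of_le_of_le_one_sub {A : Type*} [CStarAlgebra A]
    [PartialOrder A] [StarOrderedRing A] {p a b : A} (hp : IsStarProjection p)
    (ha : 0 ≤ a) (hap : a ≤ p) (hb : 0 ≤ b) (hbp : b ≤ 1 - p) : Commute p (a + b) := by
  obtain ⟨hap, hpa⟩ := hp.mul_right_and_mul_left_of_nonneg_of_le ha hap
  obtain ⟨hbp, hpb⟩ := hp.one_sub.mul_right_and_mul_left_of_nonneg_of_le hb hbp
  have hbp : b * p = 0 := by simpa [mul_sub] using hbp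
  have hpb : p * b = 0 := by simpa [sub_mul] using hpb
  simp only [Commute, SemiconjBy, mul_add, add_mul, hap, hpa, hbp, hpb]

section Operators

variable {E : Type*} [NormedAddCommGroup E] [InnerProductSpace ℂ E]

theorem ContinuousLinearMap.ext_inner_self {T S : E →L[ℂ] E}
    (h : ∀ x, ⟪x, T x⟫_ℂ = ⟪x, S x⟫_ℂ) : T = S := by
  refine ContinuousLinearMap.coe_injective ((ext_inner_map _ _).mp fun x => ?_)
  rw [← inner_conj_symm, ContinuousLinearMap.coe_coe, h, inner_conj_symm]
  rfl

theorem map_union_of_hasSum_inner {α : Type*} (M : Set α → E →L[ℂ] E) (p : Set α → Prop)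
    (hp : p ∅) (hM : ∀ (ψ : E) (S : ℕ → Set α), (∀ i, p (S i)) →
      Pairwise (Function.onFun Disjoint S) →
      HasSum (fun i => ⟪ψ, M (S i) ψ⟫_ℂ) ⟪ψ, M (⋃ i, S i) ψ⟫_ℂ)
    ⦃S₁ S₂ : Set α⦄ (h₁ : p S₁) (h₂ : p S₂) (hd : Disjoint S₁ S₂) :
    M (S₁ ∪ S₂) = M S₁ + M S₂ := by
  have hM₀ : ∀ ψ, ⟪ψ, M ∅ ψ⟫_ℂ = 0 := fun ψ => by
    have h := hM ψ (fun _ => ∅) (fun _ => hp) (fun _ _ _ => disjoint_bot_left)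
    rw [Set.iUnion_empty] at h
    exact tendsto_nhds_unique tendsto_const_nhds h.summable.tendsto_atTop_zero
  set S : ℕ → Set α := fun i => if i = 0 then S₁ else if i = 1 then S₂ else ∅
  have hS : ∀ i, p (S i) := fun i => by dsimp only [S]; split_ifs <;> assumption
  have hdisj : Pairwise (Function.onFun Disjoint S) := by
    rintro (_ | _ | i) (_ | _ | j) hij <;>
      simp_all [S, Function.onFun, hd.symm]
  have hU : (⋃ i, S i) = S₁ ∪ S₂ := by
    refine subset_antisymm (Set.iUnion_subset fun i => ?_)
      (Set.union_subset (Set.subset_iUnion S 0) (Set.subset_iUnion S 1))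
    dsimp only [S]
    split_ifs <;> simp
  refine ContinuousLinearMap.ext_inner_self fun ψ => ?_
  have h := hM ψ S hS hdisj
  rw [hU] at h
  refine h.unique ?_
  convert hasSum_sum_of_ne_finset_zero (s := {0, 1}) (f := fun i => ⟪ψ, M (S i) ψ⟫_ℂ)
    (L := SummationFilter.unconditional ℕ) ?_
  · simp [S]
  · intro i hi
    simp only [Finset.mem_insert, Finset.mem_singleton, not_or] at hi
    simp [S, hi.1, hi.2, hM₀]

open Set in
theorem commute_of_isStarProjection_prod_univ [CompleteSpace E] {α β : Type*}
    [MeasurableSpace α] [MeasurableSpace β] {U : Set β} (hU : MeasurableSet U)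
    (M : Set (α × β) → E →L[ℂ] E)
    (hpos : ∀ S, MeasurableSet S → S ⊆ univ ×ˢ U → (M S).IsPositive)
    (hnorm : M (univ ×ˢ U) = 1)
    (hadd : ∀ (ψ : E) (S : ℕ → Set (α × β)),
      (∀ i, MeasurableSet (S i) ∧ S i ⊆ univ ×ˢ U) → Pairwise (Function.onFun Disjoint S) →
      HasSum (fun i => ⟪ψ, M (S i) ψ⟫_ℂ) ⟪ψ, M (⋃ i, S i) ψ⟫_ℂ)
    {X : Set α} (hX : MeasurableSet X) (hP : IsStarProjection (M (X ×ˢ U)))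
    {Θ : Set β} (hΘ : MeasurableSet Θ) (hΘU : Θ ⊆ U) :
    Commute (M (X ×ˢ U)) (M (univ ×ˢ Θ)) := by
  have hunion := map_union_of_hasSum_inner M (fun S => MeasurableSet S ∧ S ⊆ univ ×ˢ U)
    ⟨.empty, empty_subset _⟩ hadd
  have hrect : ∀ {Y : Set α} {Θ' : Set β}, MeasurableSet Y → MeasurableSet Θ' → Θ' ⊆ U →
      MeasurableSet (Y ×ˢ Θ') ∧ Y ×ˢ Θ' ⊆ univ ×ˢ U :=
    fun hY hΘ' hΘ'U => ⟨hY.prod hΘ', prod_mono (subset_univ _) hΘ'U⟩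
  have hnonneg : ∀ {Y : Set α} {Θ' : Set β}, MeasurableSet Y → MeasurableSet Θ' → Θ' ⊆ U →
      0 ≤ M (Y ×ˢ Θ') :=
    fun hY hΘ' hΘ'U => (ContinuousLinearMap.nonneg_iff_isPositive _).mpr
      (hpos _ (hrect hY hΘ' hΘ'U).1 (hrect hY hΘ' hΘ'U).2)
  have hsplitΘ : M (X ×ˢ Θ) + M (X ×ˢ (U \ Θ)) = M (X ×ˢ U) := by
    rw [← hunion (hrect hX hΘ hΘU) (hrect hX (hU.diff hΘ) sdiff_subset)
      (disjoint_sdiff_right.set_prod_right X X), ← prod_union, union_sdiff_cancel hΘU]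
  have hsplitX : ∀ {Θ' : Set β}, MeasurableSet Θ' → Θ' ⊆ U →
      M (X ×ˢ Θ') + M (Xᶜ ×ˢ Θ') = M (univ ×ˢ Θ') := @fun Θ' hΘ' hΘ'U => by
    rw [← hunion (hrect hX hΘ' hΘ'U) (hrect hX.compl hΘ' hΘ'U)
      (disjoint_compl_right.set_prod_left Θ' Θ'), ← union_prod, union_compl_self]
  have hsplitΘc : M (Xᶜ ×ˢ Θ) + M (Xᶜ ×ˢ (U \ Θ)) = 1 - M (X ×ˢ U) := by
    rw [← hnorm, ← hsplitX hU subset_rfl, add_sub_cancel_left,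
      ← hunion (hrect hX.compl hΘ hΘU) (hrect hX.compl (hU.diff hΘ) sdiff_subset)
      (disjoint_sdiff_right.set_prod_right Xᶜ Xᶜ), ← prod_union, union_sdiff_cancel hΘU]
  rw [← hsplitX hΘ hΘU]
  refine hP.commute_add_of_le_of_le_one_sub (hnonneg hX hΘ hΘU) ?_ (hnonneg hX.compl hΘ hΘU) ?_
  · rw [← hsplitΘ]
    exact le_add_of_nonneg_right (hnonneg hX (hU.diff hΘ) sdiff_subset)
  · rw [← hsplitΘc]
    exact le_add_of_nonneg_right (hnonneg hX.compl (hU.diff hΘ) sdiff_subset)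

end Operators

theorem inner_ket_left (k : ℕ) (v : H) : ⟪ket k, v⟫_ℂ = v k := by
  simp [ket, lp.inner_single_left]

theorem ket_ne_zero (k : ℕ) : ket k ≠ 0 := fun h => by
  simpa [ket] using congrArg (fun v : H => (v : ℕ → ℂ) k) h

theorem lp_single_eq_smul_ket (k : ℕ) (c : ℂ) : lp.single 2 k c = c • ket k := by
  rw [ket, ← lp.single_smul, smul_eq_mul, mul_one]

theorem hasSum_inner_ket_apply (T : H →L[ℂ] H) (m : ℕ) (v : H) :
    HasSum (fun k => v k * ⟪ket m, T (ket k)⟫_ℂ) ⟪ket m, T v⟫_ℂ := by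
  simpa [lp_single_eq_smul_ket, inner_smul_right] using
    ((innerSL ℂ (ket m)).comp T).hasSum (lp.hasSum_single (by norm_num) v)

theorem summable_norm_apply_sq (v : H) : Summable fun k => ‖v k‖ ^ 2 := by
  simpa using (lp.hasSum_norm (p := 2) (by norm_num) v).summable

theorem eq_smul_one_of_inner_ket {T : H →L[ℂ] H} {c : ℂ}
    (hT : ∀ k l, ⟪ket k, T (ket l)⟫_ℂ = if k = l then c else 0) : T = c • 1 := by
  ext1 v
  refine lp.ext (funext fun m => ?_)
  have h := hasSum_inner_ket_apply T m v
  simp only [hT, mul_ite, mul_zero] at h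
  rw [← inner_ket_left, h.unique (hasSum_single m fun k hk => if_neg (Ne.symm hk))]
  simp [mul_comm]

/-- The matrix element `⟪ket k, E_can [0, t) (ket n)⟫` for `d = k - n`. -/
def phaseCoeff (d : ℤ) (t : ℝ) : ℂ :=
  if d = 0 then t / (2 * π) else (exp (I * t * d) - 1) / (2 * π * I * d)

@[fun_prop]
theorem continuous_phaseCoeff (d : ℤ) : Continuous (phaseCoeff d) := by
  unfold phaseCoeff
  split_ifs <;> fun_prop

theorem setIntegral_Ico_exp_eq_phaseCoeff (d : ℤ) {t : ℝ} (ht : 0 ≤ t) :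
    ∫ θ in Set.Ico 0 t, exp (I * θ * d) = 2 * π * phaseCoeff d t := by
  rw [← integral_Icc_eq_integral_Ico, integral_Icc_eq_integral_Ioc,
    ← intervalIntegral.integral_of_le ht, phaseCoeff]
  split_ifs with hd
  · simp only [hd, Int.cast_zero, mul_zero, Complex.exp_zero, intervalIntegral.integral_const,
      sub_zero, real_smul, mul_one]
    field_simp
  · have hId : I * d ≠ 0 := by simp [hd]
    simp_rw [fun θ : ℝ => mul_right_comm I (θ : ℂ) d, integral_exp_mul_complex hId]
    field_simp
    simp

theorem phaseCoeff_two_pi (d : ℤ) : phaseCoeff d (2 * π) = if d = 0 then 1 else 0 := by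
  rw [phaseCoeff]
  split_ifs with hd
  · push_cast
    field_simp
  · have : exp (I * (2 * π) * d) = 1 := by
      rw [← exp_int_mul_two_pi_mul_I d]; ring_nf
    push_cast
    simp [this]

def phaseFourier (j : ℕ) (d : ℤ) : ℂ :=
  ∫ t in Set.Ico 0 (2 * π), exp (-(I * t * j)) * phaseCoeff d t

theorem phaseFourier_of_ne_zero {j : ℕ} (hj : j ≠ 0) {d : ℤ} (hd : d ≠ 0) :
    phaseFourier j d = if d = j then (I * j)⁻¹ else 0 := by
  have h : ∀ t : ℝ, exp (-(I * t * j)) * phaseCoeff d t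
      = (2 * π * I * d)⁻¹ * (exp (I * t * (d - j : ℤ)) - exp (I * t * (-j : ℤ))) := fun t => by
    rw [phaseCoeff, if_neg hd, div_eq_inv_mul, mul_left_comm, mul_sub, ← Complex.exp_add,
      mul_one]
    push_cast
    ring_nf
  have hint : ∀ e : ℤ, IntegrableOn (fun t : ℝ => exp (I * t * e)) (Set.Ico 0 (2 * π)) :=
    fun e => (by fun_prop : Continuous _).integrableOn_Icc.mono_set Set.Ico_subset_Icc_self
  simp_rw [phaseFourier, h]
  rw [integral_const_mul, integral_sub (hint _) (hint _),
    setIntegral_Ico_exp_eq_phaseCoeff _ two_pi_pos.le,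
    setIntegral_Ico_exp_eq_phaseCoeff _ two_pi_pos.le, phaseCoeff_two_pi, phaseCoeff_two_pi,
    if_neg (by omega : -(j : ℤ) ≠ 0)]
  simp_rw [sub_eq_zero]
  split_ifs with hdj
  · subst hdj
    have : (j : ℂ) ≠ 0 := by exact_mod_cast hj
    field_simp
    simpa using hj
  · simp

def phaseBound (d : ℤ) : ℝ := if d = 0 then 1 else |(d : ℝ)|⁻¹

theorem phaseBound_nonneg (d : ℤ) : 0 ≤ phaseBound d := by
  unfold phaseBound
  split_ifs <;> positivity

theorem norm_phaseCoeff_le (d : ℤ) {t : ℝ} (ht₀ : 0 ≤ t) (ht : t ≤ 2 * π) :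
    ‖phaseCoeff d t‖ ≤ phaseBound d := by
  rw [phaseCoeff, phaseBound]
  split_ifs with hd
  · simp only [Complex.norm_div, norm_real, norm_eq_abs, abs_of_nonneg ht₀, Complex.norm_mul,
      Complex.norm_ofNat, abs_of_pos pi_pos]
    rw [div_le_one (by positivity)]
    exact ht
  · have hnum : ‖exp (I * t * d) - 1‖ ≤ 2 := by
      refine (norm_sub_le _ _).trans ?_
      rw [show I * t * d = ((t * d : ℝ) : ℂ) * I by push_cast; ring, norm_exp_ofReal_mul_I]
      norm_num
    have hd' : 0 < |(d : ℝ)| := by positivity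
    rw [norm_div, div_le_iff₀ (by simp [hd, pi_ne_zero])]
    simp only [norm_mul, Complex.norm_ofNat, norm_real, Real.norm_eq_abs, abs_of_pos pi_pos,
      norm_I, norm_intCast, mul_one]
    rw [inv_mul_eq_div, mul_div_assoc, div_self hd'.ne', mul_one]
    linarith [pi_gt_three]

theorem summable_phaseBound_sq : Summable fun d => phaseBound d ^ 2 := by
  refine ((summable_one_div_int_pow.mpr one_lt_two).update 0 1).congr fun d => ?_
  by_cases hd : d = 0 <;> simp [phaseBound, hd]

theorem hasSum_mul_phaseFourier_of_hasSum (j : ℕ) {a : ℕ → ℂ}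
    (ha : Summable fun k => ‖a k‖ ^ 2) {e : ℕ → ℤ} (he : Function.Injective e) {f : ℝ → ℂ}
    (hf : ∀ t ∈ Set.Ico 0 (2 * π), HasSum (fun k => a k * phaseCoeff (e k) t) (f t)) :
    HasSum (fun k => a k * phaseFourier j (e k))
      (∫ t in Set.Ico 0 (2 * π), exp (-(I * t * j)) * f t) := by
  have hbound : Summable fun k => ‖a k‖ * phaseBound (e k) :=
    .of_nonneg_of_le (fun k => mul_nonneg (norm_nonneg _) (phaseBound_nonneg _))
      (fun k => by
        dsimp only [Function.comp_apply]
        linarith [two_mul_le_add_sq ‖a k‖ (phaseBound (e k))])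
      ((ha.add (summable_phaseBound_sq.comp_injective he)).div_const 2)
  simp_rw [phaseFourier, ← integral_const_mul]
  refine hasSum_integral_of_dominated_convergence (fun k _ => ‖a k‖ * phaseBound (e k))
    (fun k => (by fun_prop : Continuous _).aestronglyMeasurable) (fun k => ?_)
    (ae_of_all _ fun _ => hbound) (integrable_const _) ?_
  · refine ae_restrict_of_forall_mem measurableSet_Ico fun t ht => ?_
    rw [norm_mul, norm_mul, show ‖exp (-(I * t * j))‖ = 1 by simp [norm_exp], one_mul]
    exact mul_le_mul_of_nonneg_left (norm_phaseCoeff_le _ ht.1 ht.2.le) (norm_nonneg _)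
  · refine ae_restrict_of_forall_mem measurableSet_Ico fun t ht => ?_
    simpa [mul_left_comm] using (hf t ht).mul_left (exp (-(I * t * j)))

theorem hasSum_mul_phaseFourier_natCast {j : ℕ} (hj : j ≠ 0) (a : ℕ → ℂ) :
    HasSum (fun k => a k * phaseFourier j k) (a 0 * phaseFourier j 0 + a j * (I * j)⁻¹) := by
  convert hasSum_sum_of_ne_finset_zero (s := {0, j}) (L := SummationFilter.unconditional ℕ)
    (f := fun k => a k * phaseFourier j k) ?_ using 1
  · rw [Finset.sum_pair (Ne.symm hj), Nat.cast_zero,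
      phaseFourier_of_ne_zero hj (d := j) (by exact_mod_cast hj), if_pos rfl]
  · intro k hk
    simp only [Finset.mem_insert, Finset.mem_singleton, not_or] at hk
    rw [phaseFourier_of_ne_zero hj (by exact_mod_cast hk.1), if_neg (by exact_mod_cast hk.2),
      mul_zero]

theorem hasSum_mul_phaseFourier_sub {j : ℕ} (hj : j ≠ 0) (m : ℕ) (a : ℕ → ℂ) :
    HasSum (fun k => a k * phaseFourier j (m - k))
      (a m * phaseFourier j 0 + (if j ≤ m then a (m - j) else 0) * (I * j)⁻¹) := by
  have hF : ∀ k : ℕ, k ≠ m → phaseFourier j (m - k) = if k + j = m then (I * j)⁻¹ else 0 :=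
    fun k hk => by
      rw [phaseFourier_of_ne_zero hj (by omega)]
      congr 1
      exact propext ⟨fun h => by omega, fun h => by omega⟩
  split_ifs with hjm
  · convert hasSum_sum_of_ne_finset_zero (s := {m, m - j}) (L := SummationFilter.unconditional ℕ)
      (f := fun k => a k * phaseFourier j (m - k)) ?_ using 1
    · rw [Finset.sum_pair (by omega), sub_self, hF _ (by omega), if_pos (by omega)]
    · intro k hk
      simp only [Finset.mem_insert, Finset.mem_singleton, not_or] at hk
      rw [hF _ hk.1, if_neg (by omega), mul_zero]
  · convert hasSum_single (L := SummationFilter.unconditional ℕ) m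
      (f := fun k => a k * phaseFourier j (m - k)) ?_ using 1
    · simp
    · intro k hk
      rw [hF _ hk, if_neg (by omega), mul_zero]

theorem summable_norm_inner_ket_apply_sq (T : H →L[ℂ] H) (m : ℕ) :
    Summable fun k => ‖⟪ket m, T (ket k)⟫_ℂ‖ ^ 2 := by
  refine (summable_norm_apply_sq (T.adjoint (ket m))).congr fun k => ?_
  rw [← inner_ket_left, ContinuousLinearMap.adjoint_inner_right, ← inner_conj_symm,
    RCLike.norm_conj]

theorem inner_ket_apply_ket_eq_of_commute {P : H →L[ℂ] H} {E : ℝ → H →L[ℂ] H}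
    (hE : ∀ t ∈ Set.Ico 0 (2 * π), ∀ k n : ℕ, ⟪ket k, E t (ket n)⟫_ℂ = phaseCoeff (k - n) t)
    (hcomm : ∀ t ∈ Set.Ico 0 (2 * π), Commute P (E t)) ⦃j : ℕ⦄ (hj : j ≠ 0) (m : ℕ) :
    ⟪ket m, P (ket j)⟫_ℂ = if j ≤ m then ⟪ket (m - j), P (ket 0)⟫_ℂ else 0 := by
  have hPE : ∀ t ∈ Set.Ico 0 (2 * π),
      HasSum (fun k => ⟪ket m, P (ket k)⟫_ℂ * phaseCoeff k t) ⟪ket m, P (E t (ket 0))⟫_ℂ :=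
    fun t ht => by
      simpa [← inner_ket_left, hE t ht, mul_comm] using hasSum_inner_ket_apply P m (E t (ket 0))
  have hEP : ∀ t ∈ Set.Ico 0 (2 * π),
      HasSum (fun k => ⟪ket k, P (ket 0)⟫_ℂ * phaseCoeff (m - k) t)
        ⟪ket m, P (E t (ket 0))⟫_ℂ := fun t ht => by
    rw [show P (E t (ket 0)) = E t (P (ket 0)) from DFunLike.congr_fun (hcomm t ht).eq (ket 0)]
    simpa [inner_ket_left, hE t ht] using hasSum_inner_ket_apply (E t) m (P (ket 0))
  have hPE' := hasSum_mul_phaseFourier_of_hasSum j (summable_norm_inner_ket_apply_sq P m)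
    Nat.cast_injective hPE
  have hEP' := hasSum_mul_phaseFourier_of_hasSum j (e := fun k : ℕ => (m : ℤ) - k)
    (by simpa [inner_ket_left] using summable_norm_apply_sq (P (ket 0)))
    (fun a b hab => by simpa using hab) hEP
  have h := ((hasSum_mul_phaseFourier_natCast hj _).unique hPE').trans
    (hEP'.unique (hasSum_mul_phaseFourier_sub hj m _))
  exact mul_right_cancel₀ (by simpa using hj) (add_left_cancel h)

theorem eq_smul_one_of_commute_phase {P : H →L[ℂ] H} (hP : IsSelfAdjoint P)
    {E : ℝ → H →L[ℂ] H}
    (hE : ∀ t ∈ Set.Ico 0 (2 * π), ∀ k n : ℕ, ⟪ket k, E t (ket n)⟫_ℂ = phaseCoeff (k - n) t)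
    (hcomm : ∀ t ∈ Set.Ico 0 (2 * π), Commute P (E t)) :
    P = ⟪ket 0, P (ket 0)⟫_ℂ • 1 := by
  have hrel := inner_ket_apply_ket_eq_of_commute hE hcomm
  have hupper : ∀ k l, k < l → ⟪ket k, P (ket l)⟫_ℂ = 0 := fun k l hkl => by
    rw [hrel (by omega) k, if_neg (by omega)]
  refine eq_smul_one_of_inner_ket fun k l => ?_
  rcases lt_trichotomy k l with h | rfl | h
  · rw [hupper k l h, if_neg h.ne]
  · rw [if_pos rfl]
    rcases k with _ | k
    · rfl
    · rw [hrel k.succ_ne_zero, if_pos le_rfl, Nat.sub_self]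
  · rw [if_neg h.ne', ← ContinuousLinearMap.adjoint_inner_left, hP.adjoint_eq,
      ← inner_conj_symm, hupper l k h, map_zero]

theorem eq_zero_or_one_of_isIdempotentElem_smul_one {E : Type*} [NormedAddCommGroup E]
    [NormedSpace ℂ E] {c : ℂ} (hc : IsIdempotentElem (c • 1 : E →L[ℂ] E)) {x : E}
    (hx : x ≠ 0) : c = 0 ∨ c = 1 := by
  refine IsIdempotentElem.iff_eq_zero_or_one.mp (smul_left_injective ℂ hx ?_)
  simpa [smul_smul] using DFunLike.congr_fun hc.eq x

/-- If a projection valued measure `F` on a measurable space `Ω` is jointly measurable with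
the canonical phase observable `E_can`, i.e. there is a POVM `M` on the product σ-algebra
whose margins are `F` and `E_can`, then `F` is trivial: each `F X` is `c • I` with
`c ∈ {0,1}`. -/
theorem stmt3 {Ω : Type*} [MeasurableSpace Ω]
    (Ecan : Set ℝ → H →L[ℂ] H)
    (hEcan : ∀ Θ : Set ℝ, MeasurableSet Θ → Θ ⊆ Set.Ico 0 (2*π) →
      ∀ m n : ℕ, ⟪ket m, Ecan Θ (ket n)⟫_ℂ
        = (2*π)⁻¹ * ∫ θ in Θ, Complex.exp (Complex.I * θ * ((m : ℂ) - (n : ℂ))))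
    (F : Set Ω → H →L[ℂ] H)
    -- `F` is projection valued
    (hFproj : ∀ X : Set Ω, MeasurableSet X →
      IsIdempotentElem (F X) ∧ IsSelfAdjoint (F X))
    -- `M` is a POVM on the product σ-algebra:
    (M : Set (Ω × ℝ) → H →L[ℂ] H)
    (hMpos : ∀ S : Set (Ω × ℝ), MeasurableSet S → S ⊆ Set.univ ×ˢ Set.Ico 0 (2*π) →
      (M S).IsPositive)
    (hMnorm : M (Set.univ ×ˢ Set.Ico 0 (2*π)) = (1 : H →L[ℂ] H))
    (hMadd : ∀ (ψ : H) (S : ℕ → Set (Ω × ℝ)),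
      (∀ i, MeasurableSet (S i) ∧ S i ⊆ Set.univ ×ˢ Set.Ico 0 (2*π)) →
      Pairwise (Function.onFun Disjoint S) →
      HasSum (fun i => ⟪ψ, M (S i) ψ⟫_ℂ) ⟪ψ, M (⋃ i, S i) ψ⟫_ℂ)
    -- the margins of `M` are `F` and `E_can`:
    (hMF : ∀ X : Set Ω, MeasurableSet X → M (X ×ˢ Set.Ico 0 (2*π)) = F X)
    (hME : ∀ Θ : Set ℝ, MeasurableSet Θ → Θ ⊆ Set.Ico 0 (2*π) →
      M (Set.univ ×ˢ Θ) = Ecan Θ) :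
    ∀ X : Set Ω, MeasurableSet X →
      ∃ c : ℂ, (c = 0 ∨ c = 1) ∧ F X = c • (1 : H →L[ℂ] H) := by
  intro X hX
  have hproj : IsStarProjection (F X) := (isStarProjection_iff _).mpr (hFproj X hX)
  have hE : ∀ t ∈ Set.Ico 0 (2 * π), ∀ k n : ℕ,
      ⟪ket k, Ecan (Set.Ico 0 t) (ket n)⟫_ℂ = phaseCoeff (k - n) t := by
    rintro t ⟨ht₀, ht⟩ k n
    rw [hEcan _ measurableSet_Ico (Set.Ico_subset_Ico_right ht.le),
      show (k : ℂ) - n = ((k - n : ℤ) : ℂ) by push_cast; rfl,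
      setIntegral_Ico_exp_eq_phaseCoeff _ ht₀]
    push_cast
    field_simp
  have hcomm : ∀ t ∈ Set.Ico 0 (2 * π), Commute (F X) (Ecan (Set.Ico 0 t)) := by
    rintro t ⟨-, ht⟩
    rw [← hMF X hX] at hproj ⊢
    rw [← hME _ measurableSet_Ico (Set.Ico_subset_Ico_right ht.le)]
    exact commute_of_isStarProjection_prod_univ measurableSet_Ico M hMpos hMnorm hMadd hX hproj
      measurableSet_Ico (Set.Ico_subset_Ico_right ht.le)
  have hscalar := eq_smul_one_of_commute_phase hproj.isSelfAdjoint hE hcomm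
  refine ⟨_, eq_zero_or_one_of_isIdempotentElem_smul_one ?_ (ket_ne_zero 0), hscalar⟩
  exact hscalar ▸ hproj.isIdempotentElem
end
end

section
/- Let P be a phase-shift covariant phase space observable with structure data (μ, η_m) and suppose its radial margin equals the sharp number observable, i.e., c_{mm}(X) := ∫_X ‖η_m(x)‖² dμ(x) = δ_m(X) (Dirac measure at m) for all m. Then the phase matrix of the angle margin is c_{mn} = δ_{mn}, so the angle margin is the trivial phase observable Θ ↦ (1/2π)∫_Θ dθ · I. -/
open MeasureTheory Complex Real
open scoped InnerProductSpace Classical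

noncomputable section

/-!
Since `c_{mm} = δ_m`, the vector `η_m(x)` vanishes for `μ`-a.e. `x ≠ m`; hence for `m ≠ n`
the integrand `⟪η_m(x), η_n(x)⟫` vanishes almost everywhere, and `c_{mn} = δ_{mn}`.
Integrating out the radial variable, the matrix elements of `P(ℝ₊, Θ)` are then
`(2π)⁻¹ ∫_Θ e^{iθ(m-n)} dθ · δ_{mn} = (2π)⁻¹ λ(Θ) δ_{mn}`.
-/

namespace HilbertBasis

variable {ι κ 𝕜 E F : Type*} [RCLike 𝕜]
  [NormedAddCommGroup E] [InnerProductSpace 𝕜 E] [NormedAddCommGroup F] [InnerProductSpace 𝕜 F]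

theorem ext_inner {b : HilbertBasis ι 𝕜 E} {x y : E} (h : ∀ i, ⟪b i, x⟫_𝕜 = ⟪b i, y⟫_𝕜) :
    x = y :=
  b.repr.injective <| lp.ext <| funext fun i => by
    simp only [b.repr_apply_apply, h]

theorem ext_continuousLinearMap_inner (b : HilbertBasis ι 𝕜 E) (c : HilbertBasis κ 𝕜 F)
    {A B : E →L[𝕜] F} (h : ∀ m n, ⟪c m, A (b n)⟫_𝕜 = ⟪c m, B (b n)⟫_𝕜) : A = B := by
  refine ContinuousLinearMap.ext_on (s := Set.range b) ?_ ?_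
  · simp [← Submodule.topologicalClosure_coe, dense_iff_closure_eq]
  · rintro _ ⟨n, rfl⟩
    exact ext_inner (b := c) fun m => h m n

end HilbertBasis

theorem coe_hilbertBasis_default : ⇑(default : HilbertBasis ℕ ℂ H) = ket :=
  funext fun n => (HilbertBasis.repr_symm_single default n).symm

theorem inner_ket_ket (m n : ℕ) : ⟪ket m, ket n⟫_ℂ = if m = n then 1 else 0 := by
  rw [← coe_hilbertBasis_default,
    orthonormal_iff_ite.mp (default : HilbertBasis ℕ ℂ H).orthonormal]

theorem ContinuousLinearMap.ext_ket {A B : H →L[ℂ] H}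
    (h : ∀ m n : ℕ, ⟪ket m, A (ket n)⟫_ℂ = ⟪ket m, B (ket n)⟫_ℂ) : A = B :=
  HilbertBasis.ext_continuousLinearMap_inner (default : HilbertBasis ℕ ℂ H)
    (default : HilbertBasis ℕ ℂ H) <| by
    simpa only [coe_hilbertBasis_default] using h

section VectorDensities

variable {α E 𝕜 : Type*} [MeasurableSpace α] {μ : Measure α} [RCLike 𝕜]
  [NormedAddCommGroup E] [InnerProductSpace 𝕜 E]

theorem ae_eq_zero_of_setIntegral_norm_sq_eq_zero {f : α → E} {s : Set α} (hs : MeasurableSet s)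
    (hf : IntegrableOn (fun x => ‖f x‖ ^ 2) s μ) (h : ∫ x in s, ‖f x‖ ^ 2 ∂μ = 0) :
    ∀ᵐ x ∂μ, x ∈ s → f x = 0 := by
  have hsq : ∀ᵐ x ∂μ.restrict s, ‖f x‖ ^ 2 = 0 :=
    (integral_eq_zero_iff_of_nonneg (fun x => by positivity) hf).mp h
  filter_upwards [(ae_restrict_iff' hs).mp hsq] with x hx hxs
  simpa using hx hxs

theorem ae_inner_eq_zero_of_ae_eq_zero_off {f g : α → E} {a b : α} (hab : a ≠ b)
    (hf : ∀ᵐ x ∂μ, x ≠ a → f x = 0) (hg : ∀ᵐ x ∂μ, x ≠ b → g x = 0) :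
    ∀ᵐ x ∂μ, ⟪f x, g x⟫_𝕜 = 0 := by
  filter_upwards [hf, hg] with x hfx hgx
  rcases eq_or_ne x a with rfl | hxa
  · rw [hgx hab, inner_zero_right]
  · rw [hfx hxa, inner_zero_left]

theorem integral_inner_self (f : α → E) :
    ∫ x, ⟪f x, f x⟫_𝕜 ∂μ = ((∫ x, ‖f x‖ ^ 2 ∂μ : ℝ) : 𝕜) := by
  simp_rw [inner_self_eq_norm_sq_to_K (𝕜 := 𝕜)]
  exact_mod_cast integral_ofReal (𝕜 := 𝕜)

end VectorDensities

theorem ae_le_of_measure_Iio_eq_zero {μ : Measure ℝ} {a : ℝ} (hμ : μ (Set.Iio a) = 0) :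
    ∀ᵐ x ∂μ, a ≤ x :=
  (measure_eq_zero_iff_ae_notMem.mp hμ).mono fun _ hx => not_lt.mp hx

theorem ae_eq_zero_off_of_setIntegral_norm_sq_eq_ite {E : Type*} [NormedAddCommGroup E]
    {μ : Measure ℝ} (hμ : μ (Set.Iio 0) = 0) {f : ℝ → E} {a : ℝ}
    (hf : Integrable (fun x => ‖f x‖ ^ 2) μ)
    (hrad : ∀ X : Set ℝ, MeasurableSet X → X ⊆ Set.Ici 0 →
      ∫ x in X, ‖f x‖ ^ 2 ∂μ = if a ∈ X then 1 else 0) :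
    ∀ᵐ x ∂μ, x ≠ a → f x = 0 := by
  have hS : MeasurableSet (Set.Ici 0 \ {a}) := measurableSet_Ici.diff (measurableSet_singleton a)
  have hoff := ae_eq_zero_of_setIntegral_norm_sq_eq_zero hS hf.integrableOn
    (by simp [hrad _ hS Set.sdiff_subset])
  filter_upwards [hoff, ae_le_of_measure_Iio_eq_zero hμ] with x hx hx0 hxa using hx ⟨hx0, hxa⟩

theorem stmt16_general (μ : Measure ℝ) (hμ : μ (Set.Iio 0) = 0)
    (η : ℕ → ℝ → H)
    (hη_norm : ∀ m : ℕ, ∫ x, ‖η m x‖ ^ 2 ∂μ = 1)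
    (P : Set ℝ → Set ℝ → H →L[ℂ] H)
    (hP : ∀ (X Θ : Set ℝ), MeasurableSet X → MeasurableSet Θ →
      X ⊆ Set.Ici 0 → Θ ⊆ Set.Ico 0 (2*π) → ∀ m n : ℕ,
      ⟪ket m, P X Θ (ket n)⟫_ℂ
        = (2*π)⁻¹ * ∫ x in X,
            (∫ θ in Θ, Complex.exp (Complex.I * (θ : ℂ) * ((m : ℂ) - (n : ℂ)))
              * ⟪η m x, η n x⟫_ℂ) ∂μ)
    -- the radial margin is the sharp number observable, `c_{mm}(X) = δ_m(X)`:
    (hrad : ∀ (m : ℕ) (X : Set ℝ), MeasurableSet X → X ⊆ Set.Ici 0 →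
      ∫ x in X, ‖η m x‖ ^ 2 ∂μ = if (m : ℝ) ∈ X then 1 else 0) :
    -- then the phase matrix of the angle margin is `c_{mn} = δ_{mn}` …
    (∀ m n : ℕ, ∫ x, ⟪η m x, η n x⟫_ℂ ∂μ = if m = n then 1 else 0) ∧
    -- … and the angle margin is the trivial phase observable `Θ ↦ (2π)⁻¹ λ(Θ) · I`:
    (∀ Θ : Set ℝ, MeasurableSet Θ → Θ ⊆ Set.Ico 0 (2*π) →
      P (Set.Ici 0) Θ = (((volume Θ).toReal / (2*π) : ℝ) : ℂ) • (1 : H →L[ℂ] H)) := by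
  have hInt : ∀ m, Integrable (fun x => ‖η m x‖ ^ 2) μ := fun m =>
    .of_integral_ne_zero (by simp [hη_norm m])
  have hzero : ∀ m : ℕ, ∀ᵐ x ∂μ, x ≠ (m : ℝ) → η m x = 0 := fun m =>
    ae_eq_zero_off_of_setIntegral_norm_sq_eq_ite hμ (hInt m) (hrad m)
  have hc : ∀ m n : ℕ, ∫ x, ⟪η m x, η n x⟫_ℂ ∂μ = if m = n then 1 else 0 := by
    intro m n
    split_ifs with hmn
    · subst hmn
      rw [integral_inner_self, hη_norm m, RCLike.ofReal_one]
    · exact integral_eq_zero_of_ae <|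
        ae_inner_eq_zero_of_ae_eq_zero_off (by exact_mod_cast hmn) (hzero m) (hzero n)
  refine ⟨hc, fun Θ hΘ hΘs => ContinuousLinearMap.ext_ket fun m n => ?_⟩
  have hμIci : μ.restrict (Set.Ici 0) = μ :=
    Measure.restrict_eq_self_of_ae_mem (ae_le_of_measure_Iio_eq_zero hμ)
  rw [hP _ Θ measurableSet_Ici hΘ le_rfl hΘs, hμIci]
  simp_rw [integral_mul_const]
  rw [integral_const_mul, hc, smul_apply, one_apply_eq_self,
    inner_smul_right, inner_ket_ket]
  split_ifs with hmn
  · subst hmn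
    simp only [sub_self, mul_zero, Complex.exp_zero, setIntegral_const, measureReal_def,
      real_smul, mul_one]
    push_cast
    ring
  · simp

/-- If the radial margin of a phase-shift covariant phase space observable `P` with
structure data `(μ, η_m)` is the sharp number observable, i.e.
`c_{mm}(X) = ∫_X ‖η_m(x)‖² dμ(x) = δ_m(X)`, then the phase matrix of the angle margin is
`c_{mn} = δ_{mn}`, so the angle margin is the trivial phase observable
`Θ ↦ (2π)⁻¹ λ(Θ) · I`. -/
theorem stmt16 (μ : Measure ℝ) [IsProbabilityMeasure μ] (hμ : μ (Set.Iio 0) = 0)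
    (η : ℕ → ℝ → H)
    (hη_meas : ∀ m : ℕ, AEStronglyMeasurable (η m) μ)
    (hη_norm : ∀ m : ℕ, ∫ x, ‖η m x‖ ^ 2 ∂μ = 1)
    (P : Set ℝ → Set ℝ → H →L[ℂ] H)
    (hP : ∀ (X Θ : Set ℝ), MeasurableSet X → MeasurableSet Θ →
      X ⊆ Set.Ici 0 → Θ ⊆ Set.Ico 0 (2*π) → ∀ m n : ℕ,
      ⟪ket m, P X Θ (ket n)⟫_ℂ
        = (2*π)⁻¹ * ∫ x in X,
            (∫ θ in Θ, Complex.exp (Complex.I * (θ : ℂ) * ((m : ℂ) - (n : ℂ)))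
              * ⟪η m x, η n x⟫_ℂ) ∂μ)
    -- the radial margin is the sharp number observable, `c_{mm}(X) = δ_m(X)`:
    (hrad : ∀ (m : ℕ) (X : Set ℝ), MeasurableSet X → X ⊆ Set.Ici 0 →
      ∫ x in X, ‖η m x‖ ^ 2 ∂μ = if (m : ℝ) ∈ X then 1 else 0) :
    -- then the phase matrix of the angle margin is `c_{mn} = δ_{mn}` …
    (∀ m n : ℕ, ∫ x, ⟪η m x, η n x⟫_ℂ ∂μ = if m = n then 1 else 0) ∧
    -- … and the angle margin is the trivial phase observable `Θ ↦ (2π)⁻¹ λ(Θ) · I`: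
    (∀ Θ : Set ℝ, MeasurableSet Θ → Θ ⊆ Set.Ico 0 (2*π) →
      P (Set.Ici 0) Θ = (((volume Θ).toReal / (2*π) : ℝ) : ℂ) • (1 : H →L[ℂ] H)) :=
  stmt16_general μ hμ η hη_norm P hP hrad
end
end
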